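/- Let p > 1 and let ρ(ζ) = exp(e^{2ζ}/4 − ((p+3)/(p−1))ζ), with weighted measure dμ = ρ(ζ)dζ on ℝ. Let w : ℝ → ℝ be continuously differentiable with ∫_ℝ w(ζ)² dμ(ζ) < ∞ and ∫_ℝ w'(ζ)² dμ(ζ) < ∞. Then there exists R₀' < 0 such that for all R ≤ R₀': ∫_{−∞}^R w(ζ)² dμ(ζ) ≤ 8((p−1)/(p+3))² ∫_{−∞}^R w'(ζ)² dμ(ζ). -/

import Mathlib

/-!
Write `a = (p + 3) / (p - 1)`, so that `ρ' = (e^{2ζ}/2 - a) ρ ≤ -(3a/4) ρ` for `ζ ≤ -1`. For any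
weight with `ρ' ≤ -c ρ` on `(-∞, R]`, integrating `(w² ρ)' = 2 w w' ρ + w² ρ'` gives
`0 ≤ w(R)² ρ(R) = ∫ 2 w w' ρ + w² ρ'`, the boundary term at `-∞` vanishing because `w² ρ` and
its derivative are integrable. With `2 w w' ≤ (c/2) w² + (2/c) w'²` this yields
`∫ w² ρ ≤ (4/c²) ∫ w'² ρ`, and for `c = 3a/4` the constant `64/(9a²)` is below `8/a²`.
-/

open Real Set Filter MeasureTheory

theorem MeasureTheory.Integrable.mul_mul_of_sq_mul {α : Type*} [MeasurableSpace α]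
    {μ : Measure α} {f g ρ : α → ℝ} (hf : Integrable (fun x => f x ^ 2 * ρ x) μ)
    (hg : Integrable (fun x => g x ^ 2 * ρ x) μ)
    (hm : AEStronglyMeasurable (fun x => f x * g x * ρ x) μ) (hρ : ∀ᵐ x ∂μ, 0 ≤ ρ x) :
    Integrable (fun x => f x * g x * ρ x) μ := by
  refine (hf.add hg).mono' hm (hρ.mono fun x hρx => ?_)
  have hfg : |f x * g x| ≤ f x ^ 2 + g x ^ 2 :=
    abs_le.2 ⟨by nlinarith [sq_nonneg (f x + g x)], by nlinarith [sq_nonneg (f x - g x)]⟩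
  rw [Real.norm_eq_abs, abs_mul, abs_of_nonneg hρx, Pi.add_apply, ← add_mul]
  exact mul_le_mul_of_nonneg_right hfg hρx

theorem MeasureTheory.Integrable.sq_mul_of_abs_le_mul {α : Type*} [MeasurableSpace α]
    {μ : Measure α} {w ρ g : α → ℝ} {C : ℝ} (hw : Integrable (fun x => w x ^ 2 * ρ x) μ)
    (hm : AEStronglyMeasurable (fun x => w x ^ 2 * g x) μ) (hg : ∀ᵐ x ∂μ, |g x| ≤ C * ρ x) :
    Integrable (fun x => w x ^ 2 * g x) μ := by
  refine (hw.const_mul C).mono' hm (hg.mono fun x hgx => ?_)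
  rw [norm_mul, norm_pow, Real.norm_eq_abs, Real.norm_eq_abs, sq_abs]
  nlinarith [mul_le_mul_of_nonneg_left hgx (sq_nonneg (w x))]

theorem two_mul_mul_le_half_mul_sq_add {c : ℝ} (hc : 0 < c) (x y : ℝ) :
    2 * (x * y) ≤ c / 2 * x ^ 2 + 2 / c * y ^ 2 := by
  have : c / 2 * x ^ 2 + 2 / c * y ^ 2 - 2 * (x * y) = (c * x - 2 * y) ^ 2 / (2 * c) := by
    field_simp
    ring
  linarith [div_nonneg (sq_nonneg (c * x - 2 * y)) (by positivity : (0 : ℝ) ≤ 2 * c)]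

theorem integral_Iic_sq_mul_le_of_hasDerivAt_le_neg_mul {ρ ρ' w w' : ℝ → ℝ} {c R : ℝ}
    (hc : 0 < c) (hρ : ∀ x ∈ Iic R, HasDerivAt ρ (ρ' x) x) (hρ_nonneg : ∀ x ∈ Iic R, 0 ≤ ρ x)
    (hρ'_le : ∀ x ∈ Iic R, ρ' x ≤ -c * ρ x)
    (hw : ∀ x ∈ Iic R, HasDerivAt w (w' x) x) (hw' : ContinuousOn w' (Iic R))
    (hw2 : IntegrableOn (fun x => w x ^ 2 * ρ x) (Iic R))
    (hw'2 : IntegrableOn (fun x => w' x ^ 2 * ρ x) (Iic R))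
    (hwρ' : IntegrableOn (fun x => w x ^ 2 * ρ' x) (Iic R)) :
    ∫ x in Iic R, w x ^ 2 * ρ x ≤ 4 / c ^ 2 * ∫ x in Iic R, w' x ^ 2 * ρ x := by
  set I := ∫ x in Iic R, w x ^ 2 * ρ x
  set J := ∫ x in Iic R, w' x ^ 2 * ρ x
  set F' := fun x => 2 * (w x * w' x * ρ x) + w x ^ 2 * ρ' x
  have hF : ∀ x ∈ Iic R, HasDerivAt (fun x => w x ^ 2 * ρ x) (F' x) x := fun x hx =>
    (((hw x hx).pow 2).mul (hρ x hx)).congr_deriv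
      (by simp only [F', Pi.pow_apply]; push_cast; ring)
  have hmeas : AEStronglyMeasurable (fun x => w x * w' x * ρ x) (volume.restrict (Iic R)) :=
    ((ContinuousOn.mul (fun x hx => (hw x hx).continuousAt.continuousWithinAt) hw').mul
      (fun x hx => (hρ x hx).continuousAt.continuousWithinAt)).aestronglyMeasurable
      measurableSet_Iic
  have hF'int : IntegrableOn F' (Iic R) :=
    ((hw2.mul_mul_of_sq_mul hw'2 hmeas
      ((ae_restrict_iff' measurableSet_Iic).2 (ae_of_all _ hρ_nonneg))).const_mul 2).add hwρ'
  have hFTC : ∫ x in Iic R, F' x = w R ^ 2 * ρ R := by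
    simpa using integral_Iic_of_hasDerivAt_of_tendsto' hF hF'int
      (tendsto_zero_of_hasDerivAt_of_integrableOn_Iic hF hF'int hw2)
  have hF'_le : ∀ x ∈ Iic R, F' x ≤ 2 / c * (w' x ^ 2 * ρ x) - c / 2 * (w x ^ 2 * ρ x) :=
    fun x hx => by
      nlinarith [mul_le_mul_of_nonneg_right (two_mul_mul_le_half_mul_sq_add hc (w x) (w' x))
        (hρ_nonneg x hx), mul_le_mul_of_nonneg_left (hρ'_le x hx) (sq_nonneg (w x))]
  have hint : w R ^ 2 * ρ R ≤ 2 / c * J - c / 2 * I := by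
    rw [← integral_const_mul, ← integral_const_mul, ← integral_sub (hw'2.const_mul _)
      (hw2.const_mul _), ← hFTC]
    exact setIntegral_mono_on hF'int ((hw'2.const_mul _).sub (hw2.const_mul _))
      measurableSet_Iic hF'_le
  have hwR : 0 ≤ w R ^ 2 * ρ R := mul_nonneg (sq_nonneg _) (hρ_nonneg R self_mem_Iic)
  calc I = 2 / c * (c / 2 * I) := by field_simp
    _ ≤ 2 / c * (2 / c * J) := mul_le_mul_of_nonneg_left (by linarith) (by positivity)
    _ = 4 / c ^ 2 * J := by ring

theorem hasDerivAt_exp_exp_two_mul_div_four_sub_mul (a ζ : ℝ) :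
    HasDerivAt (fun ζ => exp (exp (2 * ζ) / 4 - a * ζ))
      ((exp (2 * ζ) / 2 - a) * exp (exp (2 * ζ) / 4 - a * ζ)) ζ := by
  have h : HasDerivAt (fun ζ => exp (2 * ζ) / 4 - a * ζ) (exp (2 * ζ) * 2 / 4 - a) ζ := by
    have h2 : HasDerivAt (fun x : ℝ => 2 * x) 2 ζ := by simpa using (hasDerivAt_id ζ).const_mul 2
    have ha : HasDerivAt (fun x : ℝ => a * x) a ζ := by simpa using (hasDerivAt_id ζ).const_mul a
    exact (h2.exp.div_const 4).sub ha
  exact h.exp.congr_deriv (by ring)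

theorem abs_exp_two_mul_div_two_sub_le_and_le_of_le_neg_one {a ζ : ℝ} (ha : 1 ≤ a)
    (hζ : ζ ≤ -1) :
    |exp (2 * ζ) / 2 - a| ≤ a ∧ exp (2 * ζ) / 2 - a ≤ -(3 * a / 4) := by
  have : exp (2 * ζ) ≤ exp (-1) := exp_le_exp.2 (by linarith)
  have := exp_neg_one_lt_half
  exact ⟨abs_le.2 ⟨by linarith [exp_pos (2 * ζ)], by linarith⟩, by linarith⟩

/-- weighted Poincaré inequality at `−∞` for the weight
`ρ(ζ) = exp(e^{2ζ}/4 − ((p+3)/(p−1))ζ)`: for `w ∈ H¹(ℝ, dμ)`, there is `R₀' < 0` such that for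
all `R ≤ R₀'`, `∫_{−∞}^R w² dμ ≤ 8((p−1)/(p+3))² ∫_{−∞}^R (w')² dμ`. -/
theorem stmt_5 (p : ℝ) (hp : 1 < p)
    (ρ : ℝ → ℝ)
    (hρ : ∀ ζ, ρ ζ = Real.exp (Real.exp (2 * ζ) / 4 - ((p + 3) / (p - 1)) * ζ))
    (w : ℝ → ℝ) (hw : ContDiff ℝ 1 w)
    (hw2 : Integrable (fun ζ => (w ζ) ^ 2 * ρ ζ))
    (hw2' : Integrable (fun ζ => (deriv w ζ) ^ 2 * ρ ζ)) :
    ∃ R₀' < 0, ∀ R ≤ R₀',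
      ∫ ζ in Iic R, (w ζ) ^ 2 * ρ ζ ≤
        8 * ((p - 1) / (p + 3)) ^ 2 * ∫ ζ in Iic R, (deriv w ζ) ^ 2 * ρ ζ := by
  set a := (p + 3) / (p - 1) with ha_def
  have ha : 1 ≤ a := (one_le_div (by linarith)).2 (by linarith)
  have hρ_deriv (ζ : ℝ) : HasDerivAt ρ ((exp (2 * ζ) / 2 - a) * ρ ζ) ζ := by
    rw [show ρ = _ from funext hρ]
    exact hasDerivAt_exp_exp_two_mul_div_four_sub_mul a ζ
  have hρ_pos (ζ : ℝ) : 0 < ρ ζ := hρ ζ ▸ exp_pos _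
  have hρ_cont : Continuous ρ := continuous_iff_continuousAt.2 fun ζ => (hρ_deriv ζ).continuousAt
  have hw_cont : Continuous w := hw.continuous
  refine ⟨-1, by norm_num, fun R hR => ?_⟩
  have hρ'_bounds (ζ : ℝ) (hζ : ζ ∈ Iic R) :=
    abs_exp_two_mul_div_two_sub_le_and_le_of_le_neg_one ha (hζ.out.trans hR)
  have hwρ' : IntegrableOn (fun ζ => w ζ ^ 2 * ((exp (2 * ζ) / 2 - a) * ρ ζ)) (Iic R) :=
    hw2.integrableOn.sq_mul_of_abs_le_mul (by fun_prop : Continuous _).aestronglyMeasurable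
      ((ae_restrict_iff' measurableSet_Iic).2 (ae_of_all _ fun ζ hζ => by
        rw [abs_mul, abs_of_pos (hρ_pos ζ)]
        exact mul_le_mul_of_nonneg_right (hρ'_bounds ζ hζ).1 (hρ_pos ζ).le))
  calc ∫ ζ in Iic R, w ζ ^ 2 * ρ ζ
      ≤ 4 / (3 * a / 4) ^ 2 * ∫ ζ in Iic R, deriv w ζ ^ 2 * ρ ζ :=
        integral_Iic_sq_mul_le_of_hasDerivAt_le_neg_mul (by positivity) (fun ζ _ => hρ_deriv ζ)
          (fun ζ _ => (hρ_pos ζ).le)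
          (fun ζ hζ => mul_le_mul_of_nonneg_right (hρ'_bounds ζ hζ).2 (hρ_pos ζ).le)
          (fun ζ _ => (hw.differentiable one_ne_zero ζ).hasDerivAt)
          (hw.continuous_deriv le_rfl).continuousOn hw2.integrableOn hw2'.integrableOn hwρ'
    _ ≤ 8 * ((p - 1) / (p + 3)) ^ 2 * ∫ ζ in Iic R, deriv w ζ ^ 2 * ρ ζ := by
      gcongr
      · exact setIntegral_nonneg measurableSet_Iic fun ζ _ => mul_nonneg (sq_nonneg _) (hρ_pos ζ).le
      · rw [← one_div_div (p + 3), ← ha_def]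
        field_simp
        nlinarith
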